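/- Mertens' theorem for the model sieve: the stage-n density d n = ∏_{i=1}^{n} (1 − 1/(x i)) satisfies d n · log n → 1 as n → ∞, i.e., d n is asymptotic to 1/log n. -/

import Mathlib

/-- `gx x` is the 0-indexed strictly increasing enumeration of `{k : ℕ | k % x ≠ 1}`. -/
noncomputable def gx (x : ℕ) : ℕ → ℕ := Nat.nth (fun k => k % x ≠ 1)

/-- `modelF n` is the 0-indexed strictly increasing enumeration of the integers surviving
`n` stages of the model sieve:  `modelF 0 k = k + 1` and
`modelF (n+1) k = modelF n (gx (modelX (n+1)) k)` where `modelX (n+1) = modelF n 1`. -/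
noncomputable def modelF : ℕ → ℕ → ℕ
  | 0, k => k + 1
  | n + 1, k => modelF n (gx (modelF n 1) k)

/-- `modelX n` is the `n`-th model prime (`modelX 1 = 2, modelX 2 = 3, modelX 3 = 5, ...`). -/
noncomputable def modelX (n : ℕ) : ℕ := modelF (n - 1) 1

/-- `Lcount n t` is the number of survivors of the first `n` stages of the model sieve
that are `≤ t`. -/
noncomputable def Lcount (n t : ℕ) : ℕ := Set.ncard {k : ℕ | modelF n k ≤ t}

/-!
Let `U n = 1 / d n = ∏ x / (x - 1)` (`invDensity`) and let `p n = modelF n 1` be the next model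
prime. By induction on the stage, the `k`-th survivor of stage `n` lies between
`(k - 1) U n + 2` and `1 + (k + n) U n`. At `k = 1` the upper bound gives `p n ≤ 1 + (n + 1) U n`,
i.e. `(n + 1) (U (n + 1) - U n) ≥ 1`. Conversely, for `m = n / K` the prime `p m ≥ m log m / 4`
is so large that the stages `m + 1, …, n` strike none of the first `n - m + 2` survivors of
stage `m`; hence `p n ≥ (n - m) U m`, while `U n / U m → 1`, so that
`(n + 1) (U (n + 1) - U n) ≤ (K + 1) / (K - 1) + o(1)`. Thus the increments of `U` are
asymptotic to those of the harmonic series, and summing them gives `U n ~ log n`.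
-/

open Filter Topology Asymptotics

lemma setOf_mod_ne_one_infinite {x : ℕ} (hx : 2 ≤ x) : {k : ℕ | k % x ≠ 1}.Infinite :=
  Set.infinite_of_injective_forall_mem (f := (x * ·))
    (fun _ _ h => Nat.eq_of_mul_eq_mul_left (by omega) h) (fun n => by simp)

lemma mod_eq_one_iff_dvd {x : ℕ} (hx : 2 ≤ x) (m : ℕ) : m % x = 1 ↔ x ∣ m + x - 1 := by
  rw [← Nat.modEq_iff_dvd' (by omega), Nat.ModEq, Nat.add_mod_right, Nat.mod_eq_of_lt hx, eq_comm]

lemma count_mod_ne_one {x : ℕ} (hx : 2 ≤ x) (m : ℕ) :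
    Nat.count (· % x ≠ 1) m + (m + x - 2) / x = m := by
  induction m with
  | zero => simp [Nat.div_eq_of_lt (by omega : x - 2 < x)]
  | succ m ih =>
    rw [Nat.count_succ, show m + 1 + x - 2 = (m + x - 2) + 1 by omega, Nat.succ_div,
      show m + x - 2 + 1 = m + x - 1 by omega]
    simp only [← mod_eq_one_iff_dvd hx]
    split_ifs <;> omega

section gx

variable {x : ℕ} (hx : 2 ≤ x)
include hx

lemma gx_strictMono : StrictMono (gx x) := Nat.nth_strictMono (setOf_mod_ne_one_infinite hx)

lemma count_gx (k : ℕ) : Nat.count (· % x ≠ 1) (gx x k) = k :=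
  Nat.count_nth_of_infinite (setOf_mod_ne_one_infinite hx) k

lemma gx_eq_add_one {k : ℕ} (hk : 1 ≤ k) (hkx : k + 1 ≤ x) : gx x k = k + 1 := by
  have hmod : (k + 1) % x ≠ 1 := by
    rcases hkx.lt_or_eq with h | h
    · rw [Nat.mod_eq_of_lt h]; omega
    · rw [h, Nat.mod_self]; omega
  have hcount := count_mod_ne_one hx (k + 1)
  rw [Nat.div_eq_of_lt_le (k := 1) (by omega) (by omega)] at hcount
  have := Nat.nth_count (p := (· % x ≠ 1)) hmod
  rwa [show Nat.count (· % x ≠ 1) (k + 1) = k by omega] at this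

lemma gx_bounds (k : ℕ) :
    (k : ℝ) * (x / (x - 1)) ≤ gx x k ∧ (gx x k : ℝ) ≤ k * (x / (x - 1)) + 1 := by
  set g := gx x k
  set c := (g + x - 2) / x
  have hcount : k + c = g := by
    have := count_mod_ne_one hx g
    rwa [count_gx hx] at this
  have hg : g % x ≠ 1 := Nat.nth_mem_of_infinite (setOf_mod_ne_one_infinite hx) k
  -- `c` counts the removed numbers below `g`; as `g % x ≠ 1`, `g ≤ x * c`
  have hc_ge : g ≤ x * c := by
    have hdiv := Nat.div_add_mod g x
    have := Nat.mod_lt g (by omega : 0 < x)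
    rcases Nat.lt_or_ge (g % x) 2 with hr | hr
    · have : g / x ≤ c := Nat.div_le_div_right (by omega)
      have := Nat.mul_le_mul_left x this
      omega
    · have : g / x + 1 ≤ c :=
        (Nat.le_div_iff_mul_le (by omega)).2 (by rw [add_mul, one_mul, mul_comm]; omega)
      have := Nat.mul_le_mul_left x this
      rw [mul_add] at this
      omega
  have hc_le : x * c ≤ g + x - 2 := Nat.mul_div_le _ _
  have hxg : x * g = x * k + x * c := by rw [← hcount, mul_add]
  have hx1 : (0 : ℝ) < x - 1 := by
    have : (2 : ℝ) ≤ x := by exact_mod_cast hx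
    linarith
  have h1 : (x * k + g : ℝ) ≤ x * g := by exact_mod_cast (by omega : x * k + g ≤ x * g)
  have h2 : (x * g + 2 : ℝ) ≤ x * k + g + x := by
    exact_mod_cast (by omega : x * g + 2 ≤ x * k + g + x)
  constructor
  · rw [← mul_div_assoc, div_le_iff₀ hx1]; linarith
  · rw [← mul_div_assoc, div_add_one hx1.ne', le_div_iff₀ hx1]; linarith

end gx

lemma modelF_succ (n k : ℕ) : modelF (n + 1) k = modelF n (gx (modelF n 1) k) := rfl

lemma strictMono_modelF_and_two_le (n : ℕ) : StrictMono (modelF n) ∧ 2 ≤ modelF n 1 := by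
  induction n with
  | zero => exact ⟨fun a b h => by simpa [modelF] using h, le_rfl⟩
  | succ n ih =>
    have hmono : StrictMono (modelF (n + 1)) := ih.1.comp (gx_strictMono ih.2)
    refine ⟨hmono, ?_⟩
    rw [modelF_succ, gx_eq_add_one ih.2 le_rfl (by omega)]
    exact ih.2.trans (ih.1 one_lt_two).le

lemma strictMono_modelF (n : ℕ) : StrictMono (modelF n) := (strictMono_modelF_and_two_le n).1

lemma two_le_modelF_one (n : ℕ) : 2 ≤ modelF n 1 := (strictMono_modelF_and_two_le n).2

lemma modelF_succ_one (n : ℕ) : modelF (n + 1) 1 = modelF n 2 := by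
  rw [modelF_succ, gx_eq_add_one (two_le_modelF_one n) le_rfl (two_le_modelF_one n)]

lemma strictMono_modelF_one : StrictMono (modelF · 1) :=
  strictMono_nat_of_lt_succ fun n => by
    rw [modelF_succ_one]
    exact strictMono_modelF n one_lt_two

lemma add_two_le_modelF_one (n : ℕ) : n + 2 ≤ modelF n 1 :=
  strictMono_modelF_one.add_le_nat n 0

lemma modelX_succ (n : ℕ) : modelX (n + 1) = modelF n 1 := rfl

lemma modelF_add_one {m t : ℕ} (h : t + 1 ≤ modelF m 1) :
    modelF (m + t) 1 = modelF m (t + 1) := by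
  induction t generalizing m with
  | zero => rfl
  | succ t ih =>
    rw [← add_assoc, add_right_comm, ih ((by omega : t + 1 ≤ modelF m 1).trans
      (strictMono_modelF_one (Nat.lt_succ_self m)).le), modelF_succ,
      gx_eq_add_one (two_le_modelF_one m) (by omega) h]

noncomputable def invDensity (n : ℕ) : ℝ :=
  ∏ i ∈ Finset.range n, ((modelF i 1 : ℝ) / (modelF i 1 - 1))

lemma one_lt_modelF_one (n : ℕ) : (1 : ℝ) < modelF n 1 := by
  exact_mod_cast two_le_modelF_one n

lemma invDensity_zero : invDensity 0 = 1 := Finset.prod_range_zero _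

lemma invDensity_succ (n : ℕ) :
    invDensity (n + 1) = invDensity n * ((modelF n 1 : ℝ) / (modelF n 1 - 1)) :=
  Finset.prod_range_succ _ n

lemma one_le_modelF_one_div (n : ℕ) : 1 ≤ (modelF n 1 : ℝ) / (modelF n 1 - 1) := by
  have := one_lt_modelF_one n
  rw [le_div_iff₀ (by linarith)]
  linarith

lemma one_le_invDensity (n : ℕ) : 1 ≤ invDensity n :=
  Finset.one_le_prod fun i _ => one_le_modelF_one_div i

lemma invDensity_pos (n : ℕ) : 0 < invDensity n := one_pos.trans_le (one_le_invDensity n)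

lemma invDensity_succ_sub (n : ℕ) :
    invDensity (n + 1) - invDensity n = invDensity n / (modelF n 1 - 1) := by
  have : (modelF n 1 : ℝ) - 1 ≠ 0 := by linarith [one_lt_modelF_one n]
  rw [invDensity_succ]
  field_simp
  ring

lemma prod_one_sub_inv_modelX (n : ℕ) :
    ∏ i ∈ Finset.Icc 1 n, (1 - 1 / (modelX i : ℝ)) = (invDensity n)⁻¹ := by
  induction n with
  | zero => simp [invDensity_zero]
  | succ n ih =>
    have := one_lt_modelF_one n
    rw [Finset.prod_Icc_succ_top (by omega), ih, invDensity_succ, modelX_succ, mul_inv, inv_div,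
      one_sub_div (by positivity)]

lemma modelF_bounds (n k : ℕ) :
    ((k : ℝ) - 1) * invDensity n + 2 ≤ modelF n k ∧
      (modelF n k : ℝ) ≤ 1 + (k + n) * invDensity n := by
  induction n generalizing k with
  | zero =>
    simp only [modelF, invDensity_zero]
    push_cast
    constructor <;> linarith
  | succ n ih =>
    set x := modelF n 1
    obtain ⟨hlow, hupp⟩ := gx_bounds (two_le_modelF_one n) k
    obtain ⟨ihlow, ihupp⟩ := ih (gx x k)
    have hU := invDensity_pos n
    have hr := one_le_modelF_one_div n
    rw [modelF_succ, invDensity_succ]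
    push_cast
    constructor
    · nlinarith
    · nlinarith

lemma one_le_succ_mul_invDensity_succ_sub (n : ℕ) :
    1 ≤ ((n : ℝ) + 1) * (invDensity (n + 1) - invDensity n) := by
  have hx := one_lt_modelF_one n
  have hupp := (modelF_bounds n 1).2
  push_cast at hupp
  rw [invDensity_succ_sub, mul_div_assoc', le_div_iff₀ (by linarith)]
  linarith

lemma harmonic_le_invDensity (n : ℕ) : (harmonic n : ℝ) ≤ invDensity n := by
  induction n with
  | zero => simp [invDensity_zero]
  | succ n ih =>
    have := one_le_succ_mul_invDensity_succ_sub n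
    rw [harmonic_succ]
    push_cast
    rw [← div_le_iff₀' (by positivity), one_div] at this
    linarith

lemma log_add_one_le_invDensity (n : ℕ) : Real.log (n + 1) ≤ invDensity n := by
  exact_mod_cast (log_add_one_le_harmonic n).trans (harmonic_le_invDensity n)

lemma sub_mul_invDensity_add_two_le {m n : ℕ} (hmn : m ≤ n) (h : n - m + 1 ≤ modelF m 1) :
    ((n : ℝ) - m) * invDensity m + 2 ≤ modelF n 1 := by
  have hlow := (modelF_bounds m (n - m + 1)).1
  rw [← modelF_add_one h, Nat.add_sub_cancel' hmn] at hlow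
  push_cast [hmn] at hlow
  linarith

lemma mul_log_le_modelF_one (n : ℕ) :
    (n : ℝ) * Real.log n ≤ 4 * ((modelF n 1 : ℝ) - 2) := by
  rcases Nat.eq_zero_or_pos n with rfl | hn
  · simp [two_le_modelF_one]
  have hshift := sub_mul_invDensity_add_two_le (Nat.div_le_self n 2)
    (by have := add_two_le_modelF_one (n / 2); omega)
  have hhalf : (n : ℝ) ≤ 2 * ((n : ℝ) - (n / 2 : ℕ)) := by
    have : ((n / 2 : ℕ) : ℝ) * 2 ≤ n := by exact_mod_cast Nat.div_mul_le_self n 2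
    linarith
  have hlog : Real.log n ≤ 2 * invDensity (n / 2) := by
    have hsq : (n : ℝ) ≤ ((n / 2 : ℕ) + 1 : ℝ) ^ 2 := by
      exact_mod_cast (by nlinarith [Nat.lt_div_mul_add (a := n) two_pos] : n ≤ (n / 2 + 1) ^ 2)
    calc Real.log n ≤ Real.log (((n / 2 : ℕ) + 1 : ℝ) ^ 2) :=
          Real.log_le_log (by exact_mod_cast hn) hsq
      _ = 2 * Real.log ((n / 2 : ℕ) + 1) := by rw [Real.log_pow]; norm_num
      _ ≤ 2 * invDensity (n / 2) := by gcongr; exact log_add_one_le_invDensity _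
  have hlog0 : 0 ≤ Real.log n := Real.log_natCast_nonneg n
  nlinarith [invDensity_pos (n / 2)]

lemma tendsto_succ_div_modelF_one_sub_one :
    Tendsto (fun m : ℕ => ((m : ℝ) + 1) / ((modelF m 1 : ℝ) - 1)) atTop (𝓝 0) := by
  have hlog : Tendsto (fun m : ℕ => 8 / Real.log m) atTop (𝓝 0) :=
    tendsto_const_nhds.div_atTop (Real.tendsto_log_atTop.comp tendsto_natCast_atTop_atTop)
  refine squeeze_zero' (Eventually.of_forall fun m => ?_) ?_ hlog
  · have := one_lt_modelF_one m
    positivity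
  filter_upwards [eventually_ge_atTop 2] with m hm
  have hm' : (2 : ℝ) ≤ m := by exact_mod_cast hm
  have hlogm : 0 < Real.log m := Real.log_pos (by linarith)
  have hgrowth := mul_log_le_modelF_one m
  have := one_lt_modelF_one m
  rw [div_le_div_iff₀ (by linarith) hlogm]
  nlinarith

lemma invDensity_le_mul_exp {m n : ℕ} (hmn : m ≤ n) :
    invDensity n ≤ invDensity m * Real.exp ((n - m) / ((modelF m 1 : ℝ) - 1)) := by
  induction n, hmn using Nat.le_induction with
  | base => simp
  | succ n hmn ih =>
    have hm := one_lt_modelF_one m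
    have hpn : (modelF m 1 : ℝ) ≤ modelF n 1 := by
      exact_mod_cast strictMono_modelF_one.monotone hmn
    have hfactor : 1 / ((modelF n 1 : ℝ) - 1) + 1 ≤ Real.exp (1 / ((modelF m 1 : ℝ) - 1)) :=
      (by gcongr : 1 / ((modelF n 1 : ℝ) - 1) + 1 ≤ 1 / ((modelF m 1 : ℝ) - 1) + 1).trans
        (Real.add_one_le_exp _)
    calc invDensity (n + 1) = invDensity n * (1 / ((modelF n 1 : ℝ) - 1) + 1) := by
          rw [mul_add, mul_one_div, ← invDensity_succ_sub]; ring
      _ ≤ invDensity m * Real.exp ((n - m) / ((modelF m 1 : ℝ) - 1)) *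
            Real.exp (1 / ((modelF m 1 : ℝ) - 1)) := by
          have : (0 : ℝ) ≤ 1 / ((modelF n 1 : ℝ) - 1) :=
            one_div_nonneg.2 (by linarith [one_lt_modelF_one n])
          exact mul_le_mul ih hfactor (by linarith) (mul_pos (invDensity_pos m) (Real.exp_pos _)).le
      _ = invDensity m * Real.exp (((n + 1 : ℕ) - m) / ((modelF m 1 : ℝ) - 1)) := by
          rw [mul_assoc, ← Real.exp_add]; push_cast; ring_nf

lemma succ_mul_invDensity_succ_sub_le {m n : ℕ} (hmn : m < n) (h : n - m + 1 ≤ modelF m 1) :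
    ((n : ℝ) + 1) * (invDensity (n + 1) - invDensity n) ≤
      (n + 1) / (n - m) * Real.exp ((n - m) / ((modelF m 1 : ℝ) - 1)) := by
  have hpn := sub_mul_invDensity_add_two_le hmn.le h
  have hexp := invDensity_le_mul_exp hmn.le
  have hUm := invDensity_pos m
  have hpn1 := one_lt_modelF_one n
  have hnm : (0 : ℝ) < n - m := sub_pos.2 (by exact_mod_cast hmn)
  rw [invDensity_succ_sub, mul_div_assoc', div_mul_eq_mul_div,
    div_le_div_iff₀ (by linarith) hnm]
  have hT := Real.exp_pos ((n - m) / ((modelF m 1 : ℝ) - 1))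
  calc ((n : ℝ) + 1) * invDensity n * (n - m)
      ≤ (n + 1) * (invDensity m * Real.exp ((n - m) / ((modelF m 1 : ℝ) - 1))) * (n - m) := by
        gcongr
    _ = (n + 1) * Real.exp ((n - m) / ((modelF m 1 : ℝ) - 1)) * ((n - m) * invDensity m) := by
        ring
    _ ≤ (n + 1) * Real.exp ((n - m) / ((modelF m 1 : ℝ) - 1)) * (modelF n 1 - 1) := by
        gcongr
        linarith

lemma succ_mul_invDensity_succ_sub_le_of_div {K n : ℕ} (hK : 2 ≤ K) (hn : K ≤ n)
    (h : (K : ℝ) * (((n / K : ℕ) + 1) / ((modelF (n / K) 1 : ℝ) - 1)) ≤ 1) :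
    ((n : ℝ) + 1) * (invDensity (n + 1) - invDensity n) ≤
      (K + 1) / (K - 1) *
        Real.exp (K * (((n / K : ℕ) + 1) / ((modelF (n / K) 1 : ℝ) - 1))) := by
  set m := n / K
  have hp : (1 : ℝ) < modelF m 1 := one_lt_modelF_one m
  have hKm : K * m ≤ n := Nat.mul_div_le n K
  have hnK : n < K * (m + 1) := Nat.lt_mul_div_succ n (by omega)
  have hmn : m < n := Nat.div_lt_self (by omega) (by omega)
  clear_value m
  have hKp : (K : ℝ) * (m + 1) ≤ modelF m 1 - 1 := by
    rwa [mul_div_assoc', div_le_one (by linarith)] at h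
  have hKpN : K * (m + 1) + 1 ≤ modelF m 1 := by
    have : ((K * (m + 1) + 1 : ℕ) : ℝ) ≤ modelF m 1 := by push_cast; linarith
    exact_mod_cast this
  have hK' : (2 : ℝ) ≤ K := by exact_mod_cast hK
  have hKmR : (K : ℝ) * m ≤ n := by exact_mod_cast hKm
  have hnKR : (n : ℝ) + 1 ≤ K * (m + 1) := by exact_mod_cast hnK
  have hnR : (K : ℝ) ≤ n := by exact_mod_cast hn
  have hnm : (0 : ℝ) < n - m := sub_pos.2 (by exact_mod_cast hmn)
  have hratio : ((n : ℝ) + 1) / (n - m) ≤ (K + 1) / (K - 1) := by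
    rw [div_le_div_iff₀ hnm (by linarith)]
    nlinarith
  have hexponent :
      ((n : ℝ) - m) / ((modelF m 1 : ℝ) - 1) ≤ K * ((m + 1) / ((modelF m 1 : ℝ) - 1)) := by
    rw [mul_div_assoc']
    gcongr
    linarith
  have hshift : n - m + 1 ≤ modelF m 1 := by
    have : K * (m + 1) = K * m + K := by ring
    omega
  refine (succ_mul_invDensity_succ_sub_le hmn hshift).trans ?_
  exact mul_le_mul hratio (Real.exp_le_exp.2 hexponent) (Real.exp_pos _).le
    (div_nonneg (by linarith) (by linarith))

lemma tendsto_succ_mul_invDensity_succ_sub :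
    Tendsto (fun n : ℕ => ((n : ℝ) + 1) * (invDensity (n + 1) - invDensity n))
      atTop (𝓝 1) := by
  refine tendsto_order.2 ⟨fun a ha => Eventually.of_forall fun n =>
    ha.trans_le (one_le_succ_mul_invDensity_succ_sub n), fun b hb => ?_⟩
  obtain ⟨K, hK⟩ := exists_nat_gt ((b + 1) / (b - 1))
  have hb1 : 0 < b - 1 := by linarith
  have hKb : (b + 1) < K * (b - 1) := (div_lt_iff₀ hb1).1 hK
  have hK2 : 2 ≤ K := by
    have : (1 : ℝ) < K := by nlinarith
    have : 1 < K := by exact_mod_cast this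
    omega
  have hK2' : (2 : ℝ) ≤ K := by exact_mod_cast hK2
  have hlimit : ((K : ℝ) + 1) / (K - 1) < b := by
    rw [div_lt_iff₀ (by linarith)]; linarith
  have hsmall : Tendsto
      (fun n : ℕ => (K : ℝ) * (((n / K : ℕ) + 1) / ((modelF (n / K) 1 : ℝ) - 1)))
      atTop (𝓝 0) := by
    simpa using (tendsto_succ_div_modelF_one_sub_one.comp
      (Nat.tendsto_div_const_atTop (by omega : K ≠ 0))).const_mul (K : ℝ)
  have hbound : Tendsto (fun n : ℕ => ((K : ℝ) + 1) / (K - 1) *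
      Real.exp (K * (((n / K : ℕ) + 1) / ((modelF (n / K) 1 : ℝ) - 1)))) atTop
      (𝓝 (((K : ℝ) + 1) / (K - 1))) := by
    simpa using ((Real.continuous_exp.tendsto 0).comp hsmall).const_mul (((K : ℝ) + 1) / (K - 1))
  filter_upwards [hbound.eventually (gt_mem_nhds hlimit), hsmall.eventually (ge_mem_nhds one_pos),
    eventually_ge_atTop K] with n hlt hle hn
  exact (succ_mul_invDensity_succ_sub_le_of_div hK2 hn hle).trans_lt hlt

lemma isEquivalent_log_of_tendsto_succ_mul_sub {u : ℕ → ℝ}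
    (hu : Tendsto (fun n : ℕ => ((n : ℝ) + 1) * (u (n + 1) - u n)) atTop (𝓝 1)) :
    u ~[atTop] fun n => Real.log n := by
  have hH : Tendsto (fun n : ℕ => (harmonic n : ℝ)) atTop atTop :=
    tendsto_atTop_mono (fun n => by exact_mod_cast log_add_one_le_harmonic n)
      (Real.tendsto_log_atTop.comp (tendsto_natCast_atTop_atTop.comp (tendsto_add_atTop_nat 1)))
  have hinc : (fun n => u (n + 1) - u n) ~[atTop] fun n : ℕ => ((n : ℝ) + 1)⁻¹ := by
    refine isEquivalent_of_tendsto_one (hu.congr fun n => ?_)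
    simp [div_eq_mul_inv, mul_comm]
  have hsum : (fun n => u n - u 0 - harmonic n) =o[atTop] fun n => (harmonic n : ℝ) := by
    refine (hinc.isLittleO.sum_range (fun n => by positivity) (by simpa [harmonic] using hH)).congr
      (fun n => ?_) (fun n => ?_)
    · simp only [Pi.sub_apply, Finset.sum_sub_distrib, Finset.sum_range_sub u, harmonic]
      push_cast
      ring
    · simp [harmonic]
  have hu0 : (fun _ : ℕ => u 0) =o[atTop] fun n => (harmonic n : ℝ) :=
    isLittleO_const_left.2 (Or.inr (tendsto_norm_atTop_atTop.comp hH))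
  have hharmonic : (fun n : ℕ => (harmonic n : ℝ)) ~[atTop] fun n => Real.log n := by
    refine IsLittleO.isEquivalent ((Real.tendsto_harmonic_sub_log.isBigO_one ℝ).trans_isLittleO
      ((isLittleO_one_left_iff ℝ).2 (tendsto_norm_atTop_atTop.comp
        (Real.tendsto_log_atTop.comp tendsto_natCast_atTop_atTop))))
  refine IsEquivalent.trans (IsLittleO.isEquivalent ?_) hharmonic
  exact (hsum.add hu0).congr_left fun n => by simp only [Pi.sub_apply]; ring

/-- Mertens' theorem for the model sieve: the stage-`n` density
`d n = ∏_{i=1}^{n} (1 - 1/(x i))` is asymptotic to `1 / log n`. -/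
theorem model_sieve_mertens :
    Filter.Tendsto
      (fun n : ℕ => (∏ i ∈ Finset.Icc 1 n, (1 - 1 / (modelX i : ℝ))) * Real.log n)
      Filter.atTop (nhds 1) := by
  have hequiv := isEquivalent_log_of_tendsto_succ_mul_sub tendsto_succ_mul_invDensity_succ_sub
  refine ((isEquivalent_iff_tendsto_one
    (Eventually.of_forall fun n => (invDensity_pos n).ne')).1 hequiv.symm).congr fun n => ?_
  rw [prod_one_sub_inv_modelX, Pi.div_apply, inv_mul_eq_div]
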